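/- If τ ∈ ℝ^J satisfies the symmetry α_k τ_k = −α_{J−k+1}τ_{J−k+1} with symmetric α (α_k = α_{J−k+1}), and Π is a probability density symmetric about 0, then ∫ π_J(θ)² π_0(θ) Π(θ) dθ = ∫ π_J(θ) π_0(θ)² Π(θ) dθ, where π_j are the GPCM probabilities. -/

import Mathlib

open Real MeasureTheory Finset

noncomputable def gpcmPi (J : ℕ) (α τ : ℕ → ℝ) (θ : ℝ) (j : ℕ) : ℝ :=
  Real.exp (∑ s ∈ Finset.Icc 1 j, α s * (θ - τ s)) /
    ∑ k ∈ Finset.Icc 0 J, Real.exp (∑ s ∈ Finset.Icc 1 k, α s * (θ - τ s))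

/-!
With the cumulative logits `S_k(θ) = ∑_{s ≤ k} α_s (θ - τ_s)`, the symmetry of `α` and `τ`
gives `S_k(-θ) = S_{J-k}(θ) - S_J(θ)`. The common factor `exp (-S_J(θ))` cancels in the
softmax, so `π_k(-θ) = π_{J-k}(θ)`: reflecting `θ` swaps `π_J` and `π_0`, and the substitution
`θ ↦ -θ`, under which `Π` is invariant, exchanges the two integrands.
-/

noncomputable def gpcmCumLogit (α τ : ℕ → ℝ) (θ : ℝ) (k : ℕ) : ℝ :=
  ∑ s ∈ Icc 1 k, α s * (θ - τ s)

theorem gpcmPi_eq_exp_div (J : ℕ) (α τ : ℕ → ℝ) (θ : ℝ) (j : ℕ) :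
    gpcmPi J α τ θ j =
      exp (gpcmCumLogit α τ θ j) / ∑ k ∈ Icc 0 J, exp (gpcmCumLogit α τ θ k) :=
  rfl

theorem sum_Ioc_sub_eq_sum_Icc_reflect {M : Type*} [AddCommMonoid M] {J k : ℕ} (hk : k ≤ J)
    (f : ℕ → M) : ∑ s ∈ Ioc (J - k) J, f s = ∑ s ∈ Icc 1 k, f (J - s + 1) := by
  refine sum_nbij' (fun s => J - s + 1) (fun s => J - s + 1) ?_ ?_ ?_ ?_ ?_ <;>
    intro s hs <;> simp only [mem_Ioc, mem_Icc] at hs ⊢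
  all_goals first | omega | (congr 1; omega)

theorem sum_Icc_zero_reflect {M : Type*} [AddCommMonoid M] (J : ℕ) (f : ℕ → M) :
    ∑ k ∈ Icc 0 J, f (J - k) = ∑ k ∈ Icc 0 J, f k := by
  rw [← Nat.range_succ_eq_Icc_zero]
  exact sum_range_reflect f (J + 1)

theorem gpcmCumLogit_neg {J : ℕ} {α τ : ℕ → ℝ}
    (hsymα : ∀ k, 1 ≤ k → k ≤ J → α k = α (J - k + 1))
    (hsymτ : ∀ k, 1 ≤ k → k ≤ J → α k * τ k = -(α (J - k + 1) * τ (J - k + 1)))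
    (θ : ℝ) {k : ℕ} (hk : k ≤ J) :
    gpcmCumLogit α τ (-θ) k = gpcmCumLogit α τ θ (J - k) - gpcmCumLogit α τ θ J := by
  have hsplit : gpcmCumLogit α τ θ J =
      gpcmCumLogit α τ θ (J - k) + ∑ s ∈ Ioc (J - k) J, α s * (θ - τ s) := by
    have hIcc : ∀ n, Icc 1 n = Ioc 0 n := Icc_add_one_left_eq_Ioc 0
    simp only [gpcmCumLogit, hIcc]
    exact (sum_Ioc_consecutive _ (Nat.zero_le _) (Nat.sub_le J k)).symm
  have htail : ∑ s ∈ Ioc (J - k) J, α s * (θ - τ s) = -gpcmCumLogit α τ (-θ) k := by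
    rw [sum_Ioc_sub_eq_sum_Icc_reflect hk, gpcmCumLogit, ← sum_neg_distrib]
    refine sum_congr rfl fun s hs => ?_
    obtain ⟨hs1, hsk⟩ := mem_Icc.mp hs
    linear_combination (-θ) * hsymα s hs1 (hsk.trans hk) - hsymτ s hs1 (hsk.trans hk)
  linarith

theorem gpcmPi_neg {J : ℕ} {α τ : ℕ → ℝ}
    (hsymα : ∀ k, 1 ≤ k → k ≤ J → α k = α (J - k + 1))
    (hsymτ : ∀ k, 1 ≤ k → k ≤ J → α k * τ k = -(α (J - k + 1) * τ (J - k + 1)))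
    (θ : ℝ) {j : ℕ} (hj : j ≤ J) : gpcmPi J α τ (-θ) j = gpcmPi J α τ θ (J - j) := by
  have hdenom : ∑ k ∈ Icc 0 J, exp (gpcmCumLogit α τ (-θ) k) =
      (∑ k ∈ Icc 0 J, exp (gpcmCumLogit α τ θ k)) / exp (gpcmCumLogit α τ θ J) := by
    rw [← sum_Icc_zero_reflect J, sum_div]
    refine sum_congr rfl fun k hk => ?_
    have hkJ : k ≤ J := (mem_Icc.mp hk).2
    rw [gpcmCumLogit_neg hsymα hsymτ θ (Nat.sub_le J k), exp_sub, Nat.sub_sub_self hkJ]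
  rw [gpcmPi_eq_exp_div, gpcmPi_eq_exp_div, hdenom, gpcmCumLogit_neg hsymα hsymτ θ hj, exp_sub,
    div_div_div_cancel_right₀ (exp_ne_zero _)]

theorem gpcm_symmetric_moment_integral_general (J : ℕ) (α τ : ℕ → ℝ)
    (hsymα : ∀ k, 1 ≤ k → k ≤ J → α k = α (J - k + 1))
    (hsymτ : ∀ k, 1 ≤ k → k ≤ J → α k * τ k = -(α (J - k + 1) * τ (J - k + 1)))
    (w : ℝ → ℝ) (hsym : ∀ θ, w (-θ) = w θ) :
    ∫ θ, (gpcmPi J α τ θ J) ^ 2 * gpcmPi J α τ θ 0 * w θ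
      = ∫ θ, gpcmPi J α τ θ J * (gpcmPi J α τ θ 0) ^ 2 * w θ := by
  rw [← integral_neg_eq_self]
  congr 1 with θ
  rw [gpcmPi_neg hsymα hsymτ θ le_rfl, gpcmPi_neg hsymα hsymτ θ (Nat.zero_le J), hsym,
    Nat.sub_self, Nat.sub_zero]
  ring

/-- Under the GPCM symmetry conditions and a symmetric density `Π`,
`∫ π_J² π₀ Π dθ = ∫ π_J π₀² Π dθ`. -/
theorem gpcm_symmetric_moment_integral (J : ℕ) (hJ : 1 ≤ J) (α τ : ℕ → ℝ)
    (hα : ∀ s, 0 < α s)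
    (hsymα : ∀ k, 1 ≤ k → k ≤ J → α k = α (J - k + 1))
    (hsymτ : ∀ k, 1 ≤ k → k ≤ J → α k * τ k = -(α (J - k + 1) * τ (J - k + 1)))
    (w : ℝ → ℝ) (hnn : ∀ θ, 0 ≤ w θ) (hsym : ∀ θ, w (-θ) = w θ) (hprob : ∫ θ, w θ = 1)
    (hInt1 : Integrable (fun θ => (gpcmPi J α τ θ J) ^ 2 * gpcmPi J α τ θ 0 * w θ))
    (hInt2 : Integrable (fun θ => gpcmPi J α τ θ J * (gpcmPi J α τ θ 0) ^ 2 * w θ)) :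
    ∫ θ, (gpcmPi J α τ θ J) ^ 2 * gpcmPi J α τ θ 0 * w θ
      = ∫ θ, gpcmPi J α τ θ J * (gpcmPi J α τ θ 0) ^ 2 * w θ :=
  gpcm_symmetric_moment_integral_general J α τ hsymα hsymτ w hsym
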